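/- Let A be a countable alphabet, P a probability distribution on A, S a proper dictionary over A, and α ∈ S. Then the average length of the extended dictionary satisfies l̄(S[α]) = l̄(S) + P(α), where l̄(S) = ∑_{β∈S} P(β)|β| and the sums are taken in [0,∞]. -/

import Mathlib

open scoped ENNReal
open Filter

/-- The probability of a finite string, obtained by extending the
distribution `P` multiplicatively: `P(a₁⋯aₙ) = ∏ᵢ P(aᵢ)`. -/
noncomputable def strProb {A : Type*} (P : PMF A) (l : List A) : ℝ≥0∞ :=
  (l.map fun a => P a).prod

/-- A dictionary is a set of nonempty finite strings. -/
def IsDictionary {A : Type*} (D : Set (List A)) : Prop :=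
  ∀ α ∈ D, α ≠ []

/-- A dictionary is proper if no string in it is a (proper) prefix of
another string in it. -/
def IsProper {A : Type*} (D : Set (List A)) : Prop :=
  ∀ α ∈ D, ∀ β ∈ D, α <+: β → α = β

/-- A dictionary is complete if every infinite sequence over `A` has a
prefix in it. -/
def IsCompleteDict {A : Type*} (D : Set (List A)) : Prop :=
  ∀ x : ℕ → A, ∃ α ∈ D, α = (List.range α.length).map x

/-- The probability that the length-`n` prefix of a random infinite sequence
has some prefix belonging to `D`. -/
noncomputable def prefixProb {A : Type*} (P : PMF A) (D : Set (List A)) (n : ℕ) : ℝ≥0∞ :=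
  ∑' γ : {γ : List A // γ.length = n ∧ ∃ β ∈ D, β <+: γ}, strProb P γ

/-- `D` is almost surely complete: under the infinite product measure `P^ℕ`,
the event that an infinite sequence has a prefix in `D` has probability `1`.
(By continuity from below, this probability is the limit, as `n → ∞`, of the
probability that the length-`n` prefix has a prefix in `D`.) -/
def IsASC {A : Type*} (P : PMF A) (D : Set (List A)) : Prop :=
  Tendsto (prefixProb P D) atTop (nhds 1)

/-- `Tset D n` = strings of length `n` having no prefix in `D`. -/
def Tset {A : Type*} (D : Set (List A)) (n : ℕ) : Set (List A) :=
  {α | α.length = n ∧ ∀ β ∈ D, ¬ β <+: α}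

/-- `Dperp D n = {α ∈ D : |α| = n} ∪ Tₙ`. -/
def Dperp {A : Type*} (D : Set (List A)) (n : ℕ) : Set (List A) :=
  {α ∈ D | α.length = n} ∪ Tset D n

/-- `Dn D n = {α ∈ D : |α| < n} ∪ Dₙ^⊥`. -/
def Dn {A : Type*} (D : Set (List A)) (n : ℕ) : Set (List A) :=
  {α ∈ D | α.length < n} ∪ Dperp D n

/-- The one-letter extensions `αA = {αa : a ∈ A}` of a string `α`. -/
def oneExt {A : Type*} (α : List A) : Set (List A) :=
  {l | ∃ a : A, l = α ++ [a]}

/-- The extension `D[α] = (D \ {α}) ∪ αA` of a dictionary at `α`. -/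
def extendDict {A : Type*} (D : Set (List A)) (α : List A) : Set (List A) :=
  (D \ {α}) ∪ oneExt α

/-- The nonnegative entropy contribution `-p log₂ p ∈ [0,∞]` of a
probability value `p`. -/
noncomputable def entTerm (p : ℝ≥0∞) : ℝ≥0∞ :=
  ENNReal.ofReal (-(p.toReal * Real.logb 2 p.toReal))

/-- The entropy `H(E) = -∑_{α∈E} P(α) log₂ P(α)` of a dictionary, in `[0,∞]`. -/
noncomputable def dictEntropy {A : Type*} (P : PMF A) (E : Set (List A)) : ℝ≥0∞ :=
  ∑' α : E, entTerm (strProb P α)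

/-- The average length `l̄(E) = ∑_{α∈E} P(α)|α|` of a dictionary, in `[0,∞]`. -/
noncomputable def avgLen {A : Type*} (P : PMF A) (E : Set (List A)) : ℝ≥0∞ :=
  ∑' α : E, strProb P α * (α : List A).length

/-- The source entropy `H(P) = -∑_{a∈A} P(a) log₂ P(a)`, in `[0,∞]`. -/
noncomputable def srcEntropy {A : Type*} (P : PMF A) : ℝ≥0∞ :=
  ∑' a : A, entTerm (P a)

section

variable {A : Type*} (P : PMF A)

theorem strProb_append (l₁ l₂ : List A) :
    strProb P (l₁ ++ l₂) = strProb P l₁ * strProb P l₂ := by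
  simp only [strProb, List.map_append, List.prod_append]

theorem strProb_singleton (a : A) : strProb P [a] = P a := by
  simp [strProb]

theorem oneExt_eq_range (α : List A) :
    oneExt α = Set.range fun a : A => α ++ [a] := by
  ext l
  simp [oneExt, eq_comm]

theorem avgLen_union {s t : Set (List A)} (h : Disjoint s t) :
    avgLen P (s ∪ t) = avgLen P s + avgLen P t :=
  ENNReal.summable.tsum_union_disjoint (f := fun β => strProb P β * β.length) h ENNReal.summable

theorem avgLen_singleton (α : List A) :
    avgLen P {α} = strProb P α * α.length :=
  tsum_singleton α fun β => strProb P β * β.length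

theorem avgLen_diff_singleton_add {S : Set (List A)} {α : List A}
    (hα : α ∈ S) : avgLen P (S \ {α}) + strProb P α * α.length = avgLen P S := by
  rw [← avgLen_singleton, ← avgLen_union P Set.disjoint_sdiff_left, Set.sdiff_union_of_subset
    (Set.singleton_subset_iff.mpr hα)]

/-- Each of the strings `αa` costs one symbol more than `α`, and their probabilities
`P(α)P(a)` add up to `P(α)`. -/
theorem avgLen_oneExt (α : List A) :
    avgLen P (oneExt α) = strProb P α * α.length + strProb P α := by
  have hinj : Function.Injective fun a : A => α ++ [a] := fun a b h => by
    simpa using List.append_cancel_left h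
  have hterm : ∀ a : A, strProb P (α ++ [a]) * (α ++ [a]).length =
      P a * (strProb P α * α.length + strProb P α) := fun a => by
    rw [strProb_append, strProb_singleton, List.length_append, List.length_singleton]
    push_cast
    ring
  rw [avgLen, oneExt_eq_range, tsum_range (fun β => strProb P β * β.length) hinj]
  simp only [hterm, ENNReal.tsum_mul_right, P.tsum_coe, one_mul]

theorem IsProper.disjoint_diff_oneExt {S : Set (List A)} (hprop : IsProper S)
    {α : List A} (hα : α ∈ S) : Disjoint (S \ {α}) (oneExt α) := by
  rw [Set.disjoint_left]
  rintro β ⟨hβS, hβα⟩ ⟨a, rfl⟩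
  exact hβα (by simp [(hprop α hα _ hβS ⟨[a], rfl⟩).symm])

end

theorem avgLen_extendDict_general {A : Type*} (P : PMF A)
    (S : Set (List A)) (hprop : IsProper S)
    (α : List A) (hα : α ∈ S) :
    avgLen P (extendDict S α) = avgLen P S + strProb P α := by
  rw [extendDict, avgLen_union P (hprop.disjoint_diff_oneExt hα), avgLen_oneExt,
    ← avgLen_diff_singleton_add P hα, add_assoc]

/-- For a proper dictionary `S` and `α ∈ S`,
`l̄(S[α]) = l̄(S) + P(α)`. -/
theorem avgLen_extendDict {A : Type*} [Countable A] (P : PMF A)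
    (S : Set (List A)) (hdict : IsDictionary S) (hprop : IsProper S)
    (α : List A) (hα : α ∈ S) :
    avgLen P (extendDict S α) = avgLen P S + strProb P α :=
  avgLen_extendDict_general P S hprop α hα
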